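/- Let E be a real inner product space and φ: E → ℝ a differentiable strictly convex function with Bregman divergence d_φ. Fix β ≤ 1 and a > 0, and let f be the power-mean generator: f(z) = ((z + a)^β − 1)/β if β ≠ 0 and f(z) = ln(z + a) if β = 0, so f'(z) = (z + a)^{β−1}. Let x_1, …, x_n ∈ E, θ ∈ E, w_i = (d_φ(x_i, θ) + a)^{β−1}, and θ̃ = (Σ_i w_i x_i)/(Σ_j w_j). Then Σ_{i=1}^n f(d_φ(x_i, θ̃)) ≤ Σ_{i=1}^n f(d_φ(x_i, θ)). -/

import Mathlib

/-!
The update is a majorize–minimize step. For `β ≤ 1` the generator `f` is concave, so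
`f` lies below its tangent at `d_φ(x_i, θ)`, whose slope is the weight `w_i`; hence the objective
at `θ'` is at most the objective at `θ` plus `∑ w_i (d_φ(x_i, θ') − d_φ(x_i, θ))`. For a weighted
mean `θ'` of the `x_i` the compensation identity of Bregman divergences turns this sum into
`−(∑ w_i) d_φ(θ', θ) ≤ 0`.
-/

open scoped RealInnerProductSpace

/-- The Bregman divergence `d_φ(x, θ) = φ(x) − φ(θ) − ⟨x − θ, ∇φ(θ)⟩`. -/
noncomputable def bregman {E : Type*} [NormedAddCommGroup E] [InnerProductSpace ℝ E]
    [CompleteSpace E] (φ : E → ℝ) (x θ : E) : ℝ :=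
  φ x - φ θ - ⟪x - θ, gradient φ θ⟫

open Finset

/-- The Box–Cox transform, the power-mean generator up to the shift by `a`. -/
noncomputable def boxCox (β u : ℝ) : ℝ :=
  if β = 0 then Real.log u else (u ^ β - 1) / β

lemma boxCox_le_sub_one {β t : ℝ} (hβ : β ≤ 1) (ht : 0 < t) : boxCox β t ≤ t - 1 := by
  have hlog : Real.log t ≤ t - 1 := Real.log_le_sub_one_of_pos ht
  unfold boxCox
  split_ifs with hβ0
  · exact hlog
  rcases lt_or_gt_of_ne hβ0 with hneg | hpos
  · rw [div_le_iff_of_neg hneg]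
    have hexp : 1 + Real.log t * β ≤ t ^ β := by
      rw [Real.rpow_def_of_pos ht]
      linarith [Real.add_one_le_exp (Real.log t * β)]
    nlinarith
  · rw [div_le_iff₀ hpos]
    have := rpow_one_add_le_one_add_mul_self (s := t - 1) (by linarith) hpos.le hβ
    rw [add_sub_cancel] at this
    linarith

lemma boxCox_mul {β v t : ℝ} (hv : 0 < v) (ht : 0 < t) :
    boxCox β (v * t) = boxCox β v + v ^ β * boxCox β t := by
  unfold boxCox
  split_ifs with hβ0
  · rw [hβ0, Real.rpow_zero, one_mul, Real.log_mul hv.ne' ht.ne']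
  · rw [Real.mul_rpow hv.le ht.le]
    field_simp
    ring

lemma boxCox_le_add_rpow_mul_sub {β u v : ℝ} (hβ : β ≤ 1) (hu : 0 < u) (hv : 0 < v) :
    boxCox β u ≤ boxCox β v + v ^ (β - 1) * (u - v) := by
  have hratio : 0 < u / v := div_pos hu hv
  calc boxCox β u = boxCox β v + v ^ β * boxCox β (u / v) := by
        rw [← boxCox_mul hv hratio, mul_div_cancel₀ _ hv.ne']
    _ ≤ boxCox β v + v ^ β * (u / v - 1) := by
        gcongr
        exact boxCox_le_sub_one hβ hratio
    _ = boxCox β v + v ^ (β - 1) * (u - v) := by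
        rw [Real.rpow_sub_one hv.ne']
        field_simp

section Bregman

variable {E : Type*} [NormedAddCommGroup E] [InnerProductSpace ℝ E]

lemma sum_mul_inner_sub {ι : Type*} {s : Finset ι} {w : ι → ℝ} {x : ι → E} {c : E}
    (hc : ∑ i ∈ s, w i • x i = (∑ i ∈ s, w i) • c) (y g : E) :
    ∑ i ∈ s, w i * ⟪x i - y, g⟫ = (∑ i ∈ s, w i) * ⟪c - y, g⟫ := by
  simp only [inner_sub_left, mul_sub, sum_sub_distrib, ← real_inner_smul_left, ← sum_inner, hc,
    ← sum_smul]

variable [CompleteSpace E] {φ : E → ℝ}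

lemma bregman_nonneg (hφ : ConvexOn ℝ Set.univ φ) {θ : E} (hθ : DifferentiableAt ℝ φ θ)
    (x : E) : 0 ≤ bregman φ x θ := by
  set g : ℝ → ℝ := φ ∘ AffineMap.lineMap θ x
  have hg : ConvexOn ℝ Set.univ g := by
    simpa using hφ.comp_affineMap (AffineMap.lineMap θ x)
  have hφ' : HasFDerivAt φ (fderiv ℝ φ θ) (AffineMap.lineMap θ x (0 : ℝ)) := by
    simpa using hθ.hasFDerivAt
  have hg' : HasDerivAt g (fderiv ℝ φ θ (x - θ)) 0 :=
    hφ'.comp_hasDerivAt 0 (by simpa using AffineMap.hasDerivAt_lineMap (a := θ) (b := x) (x := 0))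
  have hslope : fderiv ℝ φ θ (x - θ) ≤ slope g 0 1 :=
    hg.le_slope_of_hasDerivAt (Set.mem_univ 0) (Set.mem_univ 1) one_pos hg'
  have hg01 : slope g 0 1 = φ x - φ θ := by simp [slope, g]
  have hgrad : fderiv ℝ φ θ (x - θ) = ⟪x - θ, gradient φ θ⟫ := by
    rw [gradient, real_inner_comm, InnerProductSpace.toDual_symm_apply]
  rw [bregman]
  linarith

/-- The compensation identity of Bregman divergences. -/
lemma sum_mul_bregman_eq {ι : Type*} {s : Finset ι} {w : ι → ℝ} {x : ι → E} {c : E}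
    (hc : ∑ i ∈ s, w i • x i = (∑ i ∈ s, w i) • c) (θ : E) :
    ∑ i ∈ s, w i * bregman φ (x i) θ
      = ∑ i ∈ s, w i * bregman φ (x i) c + (∑ i ∈ s, w i) * bregman φ c θ := by
  simp only [bregman, mul_sub, sum_sub_distrib, sum_mul_inner_sub hc, ← sum_mul, sub_self,
    inner_zero_left]
  ring

end Bregman
/-- For the power-mean generator `f(z) = ((z+a)^β − 1)/β` (with `f(z) = ln(z+a)`
for `β = 0`), `β ≤ 1`, `a > 0`, the weighted-mean update with weights
`w_i = (d_φ(x_i, θ) + a)^(β−1)` does not increase the objective. -/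
theorem power_mean_update_decreases_objective
    {E : Type*} [NormedAddCommGroup E] [InnerProductSpace ℝ E] [CompleteSpace E]
    (φ : E → ℝ) (hφdiff : Differentiable ℝ φ)
    (hφconv : StrictConvexOn ℝ Set.univ φ)
    (β a : ℝ) (hβ : β ≤ 1) (ha : 0 < a)
    (f : ℝ → ℝ)
    (hf : ∀ z : ℝ, f z = if β = 0 then Real.log (z + a) else ((z + a) ^ β - 1) / β)
    (n : ℕ) (x : Fin n → E) (θ : E)
    (w : Fin n → ℝ)
    (hw : ∀ i, w i = (bregman φ (x i) θ + a) ^ (β - 1))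
    (θnew : E) (hθnew : θnew = (∑ i, w i)⁻¹ • ∑ i, w i • x i) :
    ∑ i, f (bregman φ (x i) θnew) ≤ ∑ i, f (bregman φ (x i) θ) := by
  obtain rfl : f = fun z ↦ boxCox β (z + a) := funext hf
  rcases isEmpty_or_nonempty (Fin n) with hn | hn
  · simp
  have hd : ∀ y z, 0 ≤ bregman φ y z := fun y z ↦ bregman_nonneg hφconv.convexOn (hφdiff z) y
  have hwpos : ∀ i, 0 < w i := fun i ↦ hw i ▸ Real.rpow_pos_of_pos (by linarith [hd (x i) θ]) _
  have hW : 0 < ∑ i, w i := sum_pos (fun i _ ↦ hwpos i) univ_nonempty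
  have hmean : ∑ i, w i • x i = (∑ i, w i) • θnew := by rw [hθnew, smul_inv_smul₀ hW.ne']
  have htangent : ∀ i, boxCox β (bregman φ (x i) θnew + a) ≤ boxCox β (bregman φ (x i) θ + a)
      + w i * (bregman φ (x i) θnew - bregman φ (x i) θ) := fun i ↦ by
    have := boxCox_le_add_rpow_mul_sub (u := bregman φ (x i) θnew + a)
      (v := bregman φ (x i) θ + a) hβ (by linarith [hd (x i) θnew]) (by linarith [hd (x i) θ])
    rwa [← hw i, add_sub_add_right_eq_sub] at this
  have hcompensation := sum_mul_bregman_eq (φ := φ) hmean θ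
  calc ∑ i, boxCox β (bregman φ (x i) θnew + a)
      ≤ ∑ i, (boxCox β (bregman φ (x i) θ + a)
          + w i * (bregman φ (x i) θnew - bregman φ (x i) θ)) := sum_le_sum fun i _ ↦ htangent i
    _ = ∑ i, boxCox β (bregman φ (x i) θ + a) - (∑ i, w i) * bregman φ θnew θ := by
      simp only [sum_add_distrib, mul_sub, sum_sub_distrib]
      linarith
    _ ≤ ∑ i, boxCox β (bregman φ (x i) θ + a) := sub_le_self _ (mul_nonneg hW.le (hd θnew θ))
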